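/- arXiv:2107.14075 — 3 statements merged into one kernel-verified Lean document; each statement's English description precedes it below -/
import Mathlib

section
/- Let 𝓕 be an ω-closed family of subsets of ℕ and let x = (i₁,j₁,F₁), y = (i₂,j₂,F₂) ∈ S(𝓕). Then x and y are 𝒟-equivalent in S(𝓕) — that is, there exists z ∈ S(𝓕) such that x and z generate the same principal left ideal and z and y generate the same principal right ideal — if and only if F₁ = F₂. -/
/-- `zshift n F = {n + k : k ∈ F}`. -/
def zshift (n : ℤ) (F : Set ℤ) : Set ℤ := {m : ℤ | ∃ k ∈ F, m = n + k}

/-- A family of subsets of `ℕ` (viewed as subsets of `ℤ`) is `ω`-closed if it consists of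
sets of nonnegative integers and `F₁ ∩ (-n + F₂)` belongs to the family for all `n : ℕ`
and all members `F₁, F₂` of the family. -/
def OmegaClosed (𝓕 : Set (Set ℤ)) : Prop :=
  (∀ F ∈ 𝓕, ∀ x ∈ F, 0 ≤ x) ∧
    ∀ n : ℕ, ∀ F₁ ∈ 𝓕, ∀ F₂ ∈ 𝓕, F₁ ∩ zshift (-(n : ℤ)) F₂ ∈ 𝓕

/-- The binary operation on triples `(i, j, F)`:
`(i₁,j₁,F₁)·(i₂,j₂,F₂) = (i₁−j₁+i₂, j₂, (j₁−i₂+F₁) ∩ F₂)` if `j₁ < i₂`;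
`(i₁, j₂, F₁ ∩ F₂)` if `j₁ = i₂`; `(i₁, j₁−i₂+j₂, F₁ ∩ (i₂−j₁+F₂))` if `j₁ > i₂`. -/
def smul3 (x y : ℤ × ℤ × Set ℤ) : ℤ × ℤ × Set ℤ :=
  if x.2.1 < y.1 then
    (x.1 - x.2.1 + y.1, y.2.1, zshift (x.2.1 - y.1) x.2.2 ∩ y.2.2)
  else if x.2.1 = y.1 then
    (x.1, y.2.1, x.2.2 ∩ y.2.2)
  else
    (x.1, x.2.1 - y.1 + y.2.1, x.2.2 ∩ zshift (y.1 - x.2.1) y.2.2)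

/-- The carrier of the semigroup `S(𝓕)`: all triples whose third component lies in `𝓕`. -/
def Scar (𝓕 : Set (Set ℤ)) : Set (ℤ × ℤ × Set ℤ) := {x | x.2.2 ∈ 𝓕}

/-- The principal right ideal of `x` in `S(𝓕)`: `{x} ∪ x·S(𝓕)`. -/
def rIdeal (𝓕 : Set (Set ℤ)) (x : ℤ × ℤ × Set ℤ) : Set (ℤ × ℤ × Set ℤ) :=
  {x} ∪ smul3 x '' Scar 𝓕

/-- The principal left ideal of `x` in `S(𝓕)`: `{x} ∪ S(𝓕)·x`. -/
def lIdeal (𝓕 : Set (Set ℤ)) (x : ℤ × ℤ × Set ℤ) : Set (ℤ × ℤ × Set ℤ) :=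
  {x} ∪ (fun s => smul3 s x) '' Scar 𝓕

/-!
Membership in the principal left ideal of `(i, j, F)` is described by the second coordinate
and the set alone: `(p, q, H)` lies in it iff `H ∈ 𝓕`, `j ≤ q` and `H ⊆ (j - q) + F`. Hence
two left ideals agree iff the elements share `j` and `F`, and dually two right ideals agree iff
they share `i` and `F`. So `(i₁, j₁, F₁) 𝒟 (i₂, j₂, F₂)` forces `F₁ = F₂`, and conversely
`(i₂, j₁, F)` links `(i₁, j₁, F)` to `(i₂, j₂, F)`.
-/

lemma zshift_zero (F : Set ℤ) : zshift 0 F = F := by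
  ext m; simp [zshift]

namespace OmegaClosed

variable {𝓕 : Set (Set ℤ)}

lemma inter_zshift_mem (h : OmegaClosed 𝓕) {F G : Set ℤ} (hF : F ∈ 𝓕) (hG : G ∈ 𝓕) {d : ℤ}
    (hd : d ≤ 0) : F ∩ zshift d G ∈ 𝓕 := by
  simpa [Int.toNat_of_nonneg (neg_nonneg.mpr hd)] using h.2 (-d).toNat F hF G hG

lemma inter_mem (h : OmegaClosed 𝓕) {F G : Set ℤ} (hF : F ∈ 𝓕) (hG : G ∈ 𝓕) : F ∩ G ∈ 𝓕 := by
  simpa [zshift_zero] using h.inter_zshift_mem hF hG le_rfl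

end OmegaClosed

section Ideals

variable {𝓕 : Set (Set ℤ)} {i j p q : ℤ} {F H : Set ℤ}

lemma mem_lIdeal_iff (h : OmegaClosed 𝓕) (hF : F ∈ 𝓕) :
    (p, q, H) ∈ lIdeal 𝓕 (i, j, F) ↔ H ∈ 𝓕 ∧ j ≤ q ∧ H ⊆ zshift (j - q) F := by
  constructor
  · rintro (hw | ⟨⟨a, b, G⟩, hG, hw⟩)
    · simp only [Set.mem_singleton_iff, Prod.mk.injEq] at hw
      obtain ⟨-, rfl, rfl⟩ := hw
      simp [hF, zshift_zero]
    · simp only [smul3] at hw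
      split_ifs at hw with hlt heq <;> simp only [Prod.mk.injEq] at hw <;>
        obtain ⟨-, rfl, rfl⟩ := hw
      · refine ⟨by simpa [Set.inter_comm] using h.inter_zshift_mem hF hG (by omega : b - i ≤ 0),
          le_rfl, by simp [zshift_zero]⟩
      · exact ⟨h.inter_mem hG hF, le_rfl, by simp [zshift_zero]⟩
      · refine ⟨h.inter_zshift_mem hG hF (by omega), by omega, ?_⟩
        rw [show j - (b - i + j) = i - b by ring]
        exact Set.inter_subset_right
  · rintro ⟨hH, hjq, hHF⟩
    refine Or.inr ⟨(p, q - j + i, H), hH, ?_⟩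
    simp only [smul3]
    split_ifs with hlt heq
    · omega
    · obtain rfl : q = j := by omega
      rw [sub_self, zshift_zero] at hHF
      rw [Set.inter_eq_left.mpr hHF]
    · rw [show q - j + i - i + j = q by ring, show i - (q - j + i) = j - q by ring,
        Set.inter_eq_left.mpr hHF]

lemma mem_rIdeal_iff (h : OmegaClosed 𝓕) (hF : F ∈ 𝓕) :
    (p, q, H) ∈ rIdeal 𝓕 (i, j, F) ↔ H ∈ 𝓕 ∧ i ≤ p ∧ H ⊆ zshift (i - p) F := by
  constructor
  · rintro (hw | ⟨⟨a, b, G⟩, hG, hw⟩)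
    · simp only [Set.mem_singleton_iff, Prod.mk.injEq] at hw
      obtain ⟨rfl, -, rfl⟩ := hw
      simp [hF, zshift_zero]
    · simp only [smul3] at hw
      split_ifs at hw with hlt heq <;> simp only [Prod.mk.injEq] at hw <;>
        obtain ⟨rfl, -, rfl⟩ := hw
      · refine ⟨by simpa [Set.inter_comm] using h.inter_zshift_mem hG hF (by omega : j - a ≤ 0),
          by omega, ?_⟩
        rw [show i - (i - j + a) = j - a by ring]
        exact Set.inter_subset_left
      · exact ⟨h.inter_mem hF hG, le_rfl, by simp [zshift_zero]⟩
      · exact ⟨h.inter_zshift_mem hF hG (by omega), le_rfl, by simp [zshift_zero]⟩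
  · rintro ⟨hH, hip, hHF⟩
    refine Or.inr ⟨(p - i + j, q, H), hH, ?_⟩
    simp only [smul3]
    split_ifs with hlt heq
    · rw [show i - j + (p - i + j) = p by ring, show j - (p - i + j) = i - p by ring,
        Set.inter_eq_right.mpr hHF]
    · obtain rfl : p = i := by omega
      rw [sub_self, zshift_zero] at hHF
      rw [Set.inter_eq_right.mpr hHF]
    · omega

end Ideals

section IdealEquality

variable {𝓕 : Set (Set ℤ)} {i j i' j' : ℤ} {F F' : Set ℤ}

lemma lIdeal_eq_lIdeal_iff (h : OmegaClosed 𝓕) (hF : F ∈ 𝓕) (hF' : F' ∈ 𝓕) :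
    lIdeal 𝓕 (i, j, F) = lIdeal 𝓕 (i', j', F') ↔ j = j' ∧ F = F' := by
  constructor
  · intro he
    have h₁ := (mem_lIdeal_iff h hF').1 (by rw [← he]; exact Or.inl rfl)
    have h₂ := (mem_lIdeal_iff h hF).1 (by rw [he]; exact Or.inl rfl)
    obtain rfl : j = j' := le_antisymm h₂.2.1 h₁.2.1
    simp only [sub_self, zshift_zero] at h₁ h₂
    exact ⟨rfl, h₁.2.2.antisymm h₂.2.2⟩
  · rintro ⟨rfl, rfl⟩
    ext ⟨p, q, H⟩
    rw [mem_lIdeal_iff h hF, mem_lIdeal_iff h hF]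

lemma rIdeal_eq_rIdeal_iff (h : OmegaClosed 𝓕) (hF : F ∈ 𝓕) (hF' : F' ∈ 𝓕) :
    rIdeal 𝓕 (i, j, F) = rIdeal 𝓕 (i', j', F') ↔ i = i' ∧ F = F' := by
  constructor
  · intro he
    have h₁ := (mem_rIdeal_iff h hF').1 (by rw [← he]; exact Or.inl rfl)
    have h₂ := (mem_rIdeal_iff h hF).1 (by rw [he]; exact Or.inl rfl)
    obtain rfl : i = i' := le_antisymm h₂.2.1 h₁.2.1
    simp only [sub_self, zshift_zero] at h₁ h₂
    exact ⟨rfl, h₁.2.2.antisymm h₂.2.2⟩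
  · rintro ⟨rfl, rfl⟩
    ext ⟨p, q, H⟩
    rw [mem_rIdeal_iff h hF, mem_rIdeal_iff h hF]

end IdealEquality

/-- description of Green's relation `𝒟` on `S(𝓕)`:
`(i₁,j₁,F₁) 𝒟 (i₂,j₂,F₂)` iff `F₁ = F₂`. -/
theorem stmt8 (𝓕 : Set (Set ℤ)) (h : OmegaClosed 𝓕) (i₁ j₁ i₂ j₂ : ℤ) (F₁ F₂ : Set ℤ)
    (hF₁ : F₁ ∈ 𝓕) (hF₂ : F₂ ∈ 𝓕) :
    (∃ z ∈ Scar 𝓕, lIdeal 𝓕 (i₁, j₁, F₁) = lIdeal 𝓕 z ∧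
      rIdeal 𝓕 z = rIdeal 𝓕 (i₂, j₂, F₂)) ↔ F₁ = F₂ := by
  constructor
  · rintro ⟨⟨k, l, G⟩, hG, hl, hr⟩
    obtain ⟨-, rfl⟩ := (lIdeal_eq_lIdeal_iff h hF₁ hG).1 hl
    exact ((rIdeal_eq_rIdeal_iff h hG hF₂).1 hr).2
  · rintro rfl
    exact ⟨(i₂, j₁, F₁), hF₁, (lIdeal_eq_lIdeal_iff h hF₁ hF₁).2 ⟨rfl, rfl⟩,
      (rIdeal_eq_rIdeal_iff h hF₁ hF₁).2 ⟨rfl, rfl⟩⟩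
end

section
/- Let 𝓕 be a nonempty ω-closed family of subsets of ℕ. Then the semigroup S(𝓕) is bisimple — i.e. any two elements x, y ∈ S(𝓕) are 𝒟-equivalent (there exists z ∈ S(𝓕) with {x} ∪ S(𝓕)·x = {z} ∪ S(𝓕)·z and {z} ∪ z·S(𝓕) = {y} ∪ y·S(𝓕)) — if and only if 𝓕 consists of exactly one set. -/
/-!
Right multiplication never decreases the first coordinate and, while it keeps it, can only
shrink the set; conversely `x` and `(x.1, j, x.2.2)` generate the same right ideal, because
shifting the first coordinate of the right factor compensates the change of `j`. So
`rIdeal 𝓕 x = rIdeal 𝓕 y` iff `x` and `y` agree in their first coordinate and their set. The map `(i, j, F) ↦ (j, i, F)` is an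
anti-automorphism of `S(𝓕)`, which gives the dual statement for left ideals. Hence `𝒟`-related
elements carry the same set, and if `𝓕 = {F}` then `(y.1, x.2.1, F)` links any `x` to any `y`.
-/

lemma fst_le_fst_smul3 (x s : ℤ × ℤ × Set ℤ) : x.1 ≤ (smul3 x s).1 := by
  unfold smul3; split_ifs <;> dsimp only <;> omega

lemma smul3_snd_snd_subset_of_fst_eq {x s : ℤ × ℤ × Set ℤ} (h : (smul3 x s).1 = x.1) :
    (smul3 x s).2.2 ⊆ x.2.2 := by
  unfold smul3 at *
  split_ifs at h ⊢ <;> dsimp only at h ⊢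
  · omega
  · exact Set.inter_subset_left
  · exact Set.inter_subset_left

lemma smul3_self_right (x : ℤ × ℤ × Set ℤ) : smul3 x (x.2.1, x.2.1, x.2.2) = x := by
  simp [smul3]

lemma smul3_shift_right {x y : ℤ × ℤ × Set ℤ} (h1 : x.1 = y.1) (h2 : x.2.2 = y.2.2)
    (s : ℤ × ℤ × Set ℤ) : smul3 y (s.1 + y.2.1 - x.2.1, s.2.1, s.2.2) = smul3 x s := by
  obtain ⟨i, j, F⟩ := x
  obtain ⟨i', j', F'⟩ := y
  obtain ⟨a, b, G⟩ := s
  dsimp only at h1 h2 ⊢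
  subst h1 h2
  unfold smul3
  split_ifs <;> dsimp only at * <;> first | omega |
    (refine Prod.ext ?_ (Prod.ext ?_ ?_) <;> dsimp only <;> first | omega | ring_nf)

section Ideals

variable {𝓕 : Set (Set ℤ)} {x y : ℤ × ℤ × Set ℤ}

lemma mem_rIdeal_self : x ∈ rIdeal 𝓕 x := Or.inl rfl

lemma fst_le_and_subset_of_mem_rIdeal {w : ℤ × ℤ × Set ℤ} (hw : w ∈ rIdeal 𝓕 x) :
    x.1 ≤ w.1 ∧ (w.1 = x.1 → w.2.2 ⊆ x.2.2) := by
  rcases hw with rfl | ⟨s, -, rfl⟩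
  · exact ⟨le_rfl, fun _ => subset_rfl⟩
  · exact ⟨fst_le_fst_smul3 x s, smul3_snd_snd_subset_of_fst_eq⟩

lemma rIdeal_eq_image (hx : x ∈ Scar 𝓕) : rIdeal 𝓕 x = smul3 x '' Scar 𝓕 :=
  Set.union_eq_right.mpr <|
    Set.singleton_subset_iff.mpr ⟨(x.2.1, x.2.1, x.2.2), hx, smul3_self_right x⟩

lemma image_smul3_subset (h1 : x.1 = y.1) (h2 : x.2.2 = y.2.2) :
    smul3 x '' Scar 𝓕 ⊆ smul3 y '' Scar 𝓕 := by
  rintro _ ⟨s, hs, rfl⟩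
  exact ⟨(s.1 + y.2.1 - x.2.1, s.2.1, s.2.2), hs, smul3_shift_right h1 h2 s⟩

theorem rIdeal_eq_rIdeal_iff_s15 (hx : x ∈ Scar 𝓕) :
    rIdeal 𝓕 x = rIdeal 𝓕 y ↔ x.1 = y.1 ∧ x.2.2 = y.2.2 := by
  constructor
  · intro h
    have hy_mem : y ∈ rIdeal 𝓕 x := h ▸ mem_rIdeal_self
    have hx_mem : x ∈ rIdeal 𝓕 y := h.symm ▸ mem_rIdeal_self
    obtain ⟨hxy, hy_sub⟩ := fst_le_and_subset_of_mem_rIdeal hy_mem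
    obtain ⟨hyx, hx_sub⟩ := fst_le_and_subset_of_mem_rIdeal hx_mem
    have h1 : x.1 = y.1 := hxy.antisymm hyx
    exact ⟨h1, (hx_sub h1).antisymm (hy_sub h1.symm)⟩
  · rintro ⟨h1, h2⟩
    have hy : y ∈ Scar 𝓕 := (h2 ▸ hx : y.2.2 ∈ 𝓕)
    rw [rIdeal_eq_image hx, rIdeal_eq_image hy]
    exact (image_smul3_subset h1 h2).antisymm (image_smul3_subset h1.symm h2.symm)

end Ideals

def swapIJ (x : ℤ × ℤ × Set ℤ) : ℤ × ℤ × Set ℤ := (x.2.1, x.1, x.2.2)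

lemma swapIJ_involutive : Function.Involutive swapIJ := fun _ => rfl

lemma smul3_swapIJ (x y : ℤ × ℤ × Set ℤ) :
    smul3 (swapIJ y) (swapIJ x) = swapIJ (smul3 x y) := by
  obtain ⟨i, j, F⟩ := x
  obtain ⟨i', j', F'⟩ := y
  unfold smul3 swapIJ
  split_ifs <;> dsimp only at * <;> first | omega |
    (refine Prod.ext ?_ (Prod.ext ?_ ?_) <;> dsimp only <;>
      first | omega | exact Set.inter_comm _ _)

lemma image_swapIJ_Scar (𝓕 : Set (Set ℤ)) : swapIJ '' Scar 𝓕 = Scar 𝓕 := by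
  rw [swapIJ_involutive.image_eq_preimage_symm]
  rfl

lemma lIdeal_eq_image_rIdeal (𝓕 : Set (Set ℤ)) (x : ℤ × ℤ × Set ℤ) :
    lIdeal 𝓕 x = swapIJ '' rIdeal 𝓕 (swapIJ x) := by
  rw [rIdeal, lIdeal, Set.image_union, Set.image_singleton, Set.image_image,
    ← image_swapIJ_Scar 𝓕, Set.image_image, image_swapIJ_Scar]
  simp only [← smul3_swapIJ, swapIJ_involutive x]

theorem lIdeal_eq_lIdeal_iff_s15 {𝓕 : Set (Set ℤ)} {x y : ℤ × ℤ × Set ℤ}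
    (hx : x ∈ Scar 𝓕) :
    lIdeal 𝓕 x = lIdeal 𝓕 y ↔ x.2.1 = y.2.1 ∧ x.2.2 = y.2.2 := by
  rw [lIdeal_eq_image_rIdeal, lIdeal_eq_image_rIdeal,
    swapIJ_involutive.injective.image_injective.eq_iff]
  exact rIdeal_eq_rIdeal_iff_s15 hx

theorem stmt15_general (𝓕 : Set (Set ℤ)) (hne : 𝓕.Nonempty) :
    (∀ x ∈ Scar 𝓕, ∀ y ∈ Scar 𝓕, ∃ z ∈ Scar 𝓕,
      lIdeal 𝓕 x = lIdeal 𝓕 z ∧ rIdeal 𝓕 z = rIdeal 𝓕 y) ↔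
    (∃ F : Set ℤ, 𝓕 = {F}) := by
  constructor
  · intro hbisimple
    obtain ⟨F, hF⟩ := hne
    refine ⟨F, Set.eq_singleton_iff_unique_mem.mpr ⟨hF, fun G hG => ?_⟩⟩
    obtain ⟨z, hz, hl, hr⟩ := hbisimple (0, 0, G) hG (0, 0, F) hF
    exact ((lIdeal_eq_lIdeal_iff_s15 hG).1 hl).2.trans ((rIdeal_eq_rIdeal_iff_s15 hz).1 hr).2
  · rintro ⟨F, rfl⟩ x hx y hy
    exact ⟨(y.1, x.2.1, F), rfl, (lIdeal_eq_lIdeal_iff_s15 hx).2 ⟨rfl, hx⟩,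
      (rIdeal_eq_rIdeal_iff_s15 (𝓕 := {F}) rfl).2 ⟨rfl, hy.symm⟩⟩

/-- `S(𝓕)` is bisimple (any two elements are `𝒟`-equivalent) iff `𝓕`
consists of exactly one set. -/
theorem stmt15 (𝓕 : Set (Set ℤ)) (h : OmegaClosed 𝓕) (hne : 𝓕.Nonempty) :
    (∀ x ∈ Scar 𝓕, ∀ y ∈ Scar 𝓕, ∃ z ∈ Scar 𝓕,
      lIdeal 𝓕 x = lIdeal 𝓕 z ∧ rIdeal 𝓕 z = rIdeal 𝓕 y) ↔
    (∃ F : Set ℤ, 𝓕 = {F}) :=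
  stmt15_general 𝓕 hne
end

section
/- Let 𝓕 be an ω-closed family of subsets of ℕ with ∅ ∈ 𝓕. Then the following are equivalent: (a) there exists a map g : S(𝓕) → M (where M is the semigroup of ℤ×ℤ matrix units) such that g(x·y) = g(x)·g(y) for all x, y, g is surjective, and g(x) = g(y) holds exactly when x = y or the third components of both x and y equal ∅ (i.e. the Rees quotient of S(𝓕) by the ideal of ∅-triples is isomorphic to M); (b) 𝓕 = {∅, F} where F is a one-element subset of ℕ. -/
/-- The semigroup of `ℤ × ℤ` matrix units: `(a,b)·(c,d) = (a,d)` if `b = c`, and `0`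
(represented by `none`) otherwise, with `0` absorbing. -/
def mmul : Option (ℤ × ℤ) → Option (ℤ × ℤ) → Option (ℤ × ℤ)
  | some (a, b), some (c, d) => if b = c then some (a, d) else none
  | _, _ => none

/-! The ideal of `∅`-triples is the zero of the Rees quotient, so an isomorphism onto the
matrix units sends exactly the `∅`-triples to `0`. A nonzero idempotent matrix unit is
diagonal, and distinct diagonal units multiply to `0`; hence for `a < b` in `F` the product
`(0,0,F)·(n,n,F)` with `n = b - a`, whose third component contains `a`, would have to vanish,
so every nonempty member of `𝓕` is a singleton. Two singletons `{m'} ≠ {m}` are excluded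
because `(0,0,{m})` and `(n,n,{m'})` would both act as left identity on `(n,0,{m'})`.
Conversely, for `𝓕 = {∅, {k}}` the map `(i,j,{k}) ↦ (i,j)`, `(i,j,∅) ↦ 0` is the required
isomorphism. -/

lemma zshift_empty (n : ℤ) : zshift n ∅ = ∅ := by ext x; simp [zshift]

lemma zshift_singleton (n k : ℤ) : zshift n {k} = {n + k} := by ext x; simp [zshift]

section smul3

variable {x y : ℤ × ℤ × Set ℤ}

lemma smul3_of_lt (hxy : x.2.1 < y.1) :
    smul3 x y = (x.1 - x.2.1 + y.1, y.2.1, zshift (x.2.1 - y.1) x.2.2 ∩ y.2.2) :=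
  if_pos hxy

lemma smul3_of_eq (hxy : x.2.1 = y.1) : smul3 x y = (x.1, y.2.1, x.2.2 ∩ y.2.2) := by
  rw [smul3, if_neg hxy.not_lt, if_pos hxy]

lemma smul3_snd_snd_of_left_eq_empty (hx : x.2.2 = ∅) : (smul3 x y).2.2 = ∅ := by
  unfold smul3; split_ifs <;> simp [hx, zshift_empty]

lemma smul3_snd_snd_of_right_eq_empty (hy : y.2.2 = ∅) : (smul3 x y).2.2 = ∅ := by
  unfold smul3; split_ifs <;> simp [hy, zshift_empty]

lemma smul3_snd_snd_of_singleton_of_ne {k : ℤ} (hx : x.2.2 = {k}) (hy : y.2.2 = {k})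
    (hxy : x.2.1 ≠ y.1) : (smul3 x y).2.2 = ∅ := by
  unfold smul3
  split_ifs <;> simp only [hx, hy, zshift_singleton,
    Set.inter_singleton_eq_empty, Set.mem_singleton_iff] <;> omega

end smul3

lemma mmul_none_left (u : Option (ℤ × ℤ)) : mmul none u = none := rfl

lemma mmul_none_right (u : Option (ℤ × ℤ)) : mmul u none = none := by
  rcases u with _ | ⟨a, b⟩ <;> rfl

lemma mmul_some (a b c d : ℤ) :
    mmul (some (a, b)) (some (c, d)) = if b = c then some (a, d) else none := rfl

lemma exists_eq_diag_of_mmul_self {u : Option (ℤ × ℤ)} (hu : mmul u u = u) (hne : u ≠ none) :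
    ∃ a, u = some (a, a) := by
  obtain ⟨⟨a, b⟩, rfl⟩ := Option.ne_none_iff_exists'.mp hne
  by_cases hba : b = a
  · exact ⟨a, by rw [hba]⟩
  · simp [mmul_some, hba] at hu

lemma eq_of_mmul_diag_eq_self {p q : ℤ} {u : Option (ℤ × ℤ)} (hp : mmul (some (p, p)) u = u)
    (hq : mmul (some (q, q)) u = u) (hne : u ≠ none) : p = q := by
  obtain ⟨⟨a, b⟩, rfl⟩ := Option.ne_none_iff_exists'.mp hne
  by_cases hpa : p = a <;> by_cases hqa : q = a <;> simp_all [mmul_some]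

/-- Condition (a): `g` induces an isomorphism from the Rees quotient of `S(𝓕)` by the ideal
of `∅`-triples onto the semigroup of matrix units. -/
def IsReesMatrixUnitsMap (𝓕 : Set (Set ℤ)) (g : Scar 𝓕 → Option (ℤ × ℤ)) : Prop :=
  Function.Surjective g ∧
    (∀ a b c : Scar 𝓕, (c : ℤ × ℤ × Set ℤ) = smul3 a b → g c = mmul (g a) (g b)) ∧
    ∀ a b : Scar 𝓕, g a = g b ↔ (a = b ∨ (a.1.2.2 = ∅ ∧ b.1.2.2 = ∅))

namespace IsReesMatrixUnitsMap

variable {𝓕 : Set (Set ℤ)} {g : Scar 𝓕 → Option (ℤ × ℤ)}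

lemma map_mul (hg : IsReesMatrixUnitsMap 𝓕 g) {a b c : Scar 𝓕}
    (hc : (c : ℤ × ℤ × Set ℤ) = smul3 a b) : g c = mmul (g a) (g b) :=
  hg.2.1 a b c hc

lemma eq_of_apply_eq (hg : IsReesMatrixUnitsMap 𝓕 g) {a b : Scar 𝓕} (hab : g a = g b)
    (ha : a.1.2.2 ≠ ∅) : a = b :=
  ((hg.2.2 a b).mp hab).resolve_right fun h ↦ ha h.1

lemma apply_eq_none_iff (hg : IsReesMatrixUnitsMap 𝓕 g) (hempty : (∅ : Set ℤ) ∈ 𝓕)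
    (a : Scar 𝓕) : g a = none ↔ a.1.2.2 = ∅ := by
  set e : Scar 𝓕 := ⟨(0, 0, ∅), hempty⟩
  have apply_eq_e : ∀ a : Scar 𝓕, a.1.2.2 = ∅ → g a = g e :=
    fun a ha ↦ (hg.2.2 a e).mpr (Or.inr ⟨ha, rfl⟩)
  -- `z·e` is again an `∅`-triple, so `g e = g z · g e = 0` for any `z` with `g z = 0`.
  have he : g e = none := by
    obtain ⟨z, hz⟩ := hg.1 none
    have hze : (smul3 z e).2.2 = ∅ := smul3_snd_snd_of_right_eq_empty rfl
    rw [← apply_eq_e ⟨_, show _ ∈ 𝓕 from hze ▸ hempty⟩ hze, hg.map_mul rfl, hz, mmul_none_left]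
  refine ⟨fun ha ↦ ?_, fun ha ↦ he ▸ apply_eq_e a ha⟩
  rcases (hg.2.2 a e).mp (ha.trans he.symm) with rfl | ⟨ha, -⟩
  exacts [rfl, ha]

lemma exists_apply_diag (hg : IsReesMatrixUnitsMap 𝓕 g) (hempty : (∅ : Set ℤ) ∈ 𝓕)
    {F : Set ℤ} (hF : F ∈ 𝓕) (hne : F ≠ ∅) (i : ℤ) : ∃ a, g ⟨(i, i, F), hF⟩ = some (a, a) :=
  exists_eq_diag_of_mmul_self (hg.map_mul (by simp [smul3_of_eq])).symm
    (mt (hg.apply_eq_none_iff hempty _).mp hne)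

lemma apply_diag_ne (hg : IsReesMatrixUnitsMap 𝓕 g) {F G : Set ℤ} (hF : F ∈ 𝓕) (hG : G ∈ 𝓕)
    (hne : F ≠ ∅) {i j : ℤ} (hij : i ≠ j) : g ⟨(i, i, F), hF⟩ ≠ g ⟨(j, j, G), hG⟩ := fun h ↦
  hij (congrArg (fun a : Scar 𝓕 ↦ a.1.1) (hg.eq_of_apply_eq h hne))

lemma eq_singleton_of_ne_empty (hg : IsReesMatrixUnitsMap 𝓕 g) (h : OmegaClosed 𝓕)
    (hempty : (∅ : Set ℤ) ∈ 𝓕) {F : Set ℤ} (hF : F ∈ 𝓕) (hne : F ≠ ∅) : ∃ m, F = {m} := by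
  obtain ⟨m, hm⟩ := Set.nonempty_iff_ne_empty.mpr hne
  suffices hlt : ∀ a ∈ F, ∀ b ∈ F, ¬ a < b from
    ⟨m, Set.Subsingleton.eq_singleton_of_mem
      (fun a ha b hb ↦ le_antisymm (not_lt.mp (hlt b hb a ha)) (not_lt.mp (hlt a ha b hb))) hm⟩
  intro a ha b hb hab
  obtain ⟨n, hn⟩ := Int.eq_ofNat_of_zero_le (sub_nonneg.mpr hab.le)
  have hG : zshift (-n) F ∩ F ∈ 𝓕 := Set.inter_comm F _ ▸ h.2 n F hF F hF
  have hmul := hg.map_mul (a := ⟨(0, 0, F), hF⟩) (b := ⟨(n, n, F), hF⟩)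
    (c := ⟨(n, n, zshift (-n) F ∩ F), hG⟩) (by rw [smul3_of_lt (by simp; omega)]; simp)
  obtain ⟨p, hp⟩ := hg.exists_apply_diag hempty hF hne 0
  obtain ⟨q, hq⟩ := hg.exists_apply_diag hempty hF hne n
  have hpq : p ≠ q := fun hpq ↦
    hg.apply_diag_ne hF hF hne (by omega : (0 : ℤ) ≠ n) (by rw [hp, hq, hpq])
  rw [hp, hq, mmul_some, if_neg hpq, hg.apply_eq_none_iff hempty] at hmul
  exact (Set.eq_empty_iff_forall_notMem.mp hmul) a ⟨⟨b, hb, by omega⟩, ha⟩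

lemma singleton_eq_of_mem (hg : IsReesMatrixUnitsMap 𝓕 g) (hempty : (∅ : Set ℤ) ∈ 𝓕)
    {m m' : ℤ} (hm : {m} ∈ 𝓕) (hm' : {m'} ∈ 𝓕) : m = m' := by
  wlog hlt : m' < m generalizing m m'
  · rcases (not_lt.mp hlt).lt_or_eq with hlt | heq
    exacts [(this hm' hm hlt).symm, heq]
  obtain ⟨n, hn⟩ := Int.eq_ofNat_of_zero_le (sub_nonneg.mpr hlt.le)
  set u : Scar 𝓕 := ⟨(n, 0, {m'}), hm'⟩
  have hleft : g u = mmul (g ⟨(0, 0, {m}), hm⟩) (g u) :=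
    hg.map_mul (by rw [smul3_of_lt (by simp [u]; omega)]; simp [u, zshift_singleton]; omega)
  have hdiag : g u = mmul (g ⟨(n, n, {m'}), hm'⟩) (g u) := hg.map_mul (by simp [u, smul3_of_eq])
  obtain ⟨p, hp⟩ := hg.exists_apply_diag hempty hm (Set.singleton_ne_empty m) 0
  obtain ⟨q, hq⟩ := hg.exists_apply_diag hempty hm' (Set.singleton_ne_empty m') n
  rw [hp] at hleft
  rw [hq] at hdiag
  have hpq : p = q := eq_of_mmul_diag_eq_self hleft.symm hdiag.symm
    (mt (hg.apply_eq_none_iff hempty u).mp (Set.singleton_ne_empty m'))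
  exact absurd (by rw [hp, hq, hpq])
    (hg.apply_diag_ne hm hm' (Set.singleton_ne_empty m) (by omega : (0 : ℤ) ≠ n))

lemma exists_eq_pair (hg : IsReesMatrixUnitsMap 𝓕 g) (h : OmegaClosed 𝓕)
    (hempty : (∅ : Set ℤ) ∈ 𝓕) : ∃ k : ℕ, 𝓕 = {∅, {(k : ℤ)}} := by
  obtain ⟨x, hx⟩ := hg.1 (some (0, 0))
  have hxne : x.1.2.2 ≠ ∅ := fun h0 ↦ by simp [(hg.apply_eq_none_iff hempty x).mpr h0] at hx
  obtain ⟨m, hm⟩ := hg.eq_singleton_of_ne_empty h hempty x.2 hxne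
  have hm𝓕 : {m} ∈ 𝓕 := hm ▸ x.2
  lift m to ℕ using h.1 _ hm𝓕 m rfl
  refine ⟨m, Set.ext fun F ↦ ⟨fun hF ↦ ?_, ?_⟩⟩
  · by_cases hFe : F = ∅
    · exact Or.inl hFe
    obtain ⟨m', rfl⟩ := hg.eq_singleton_of_ne_empty h hempty hF hFe
    rw [hg.singleton_eq_of_mem hempty hF hm𝓕]
    exact Or.inr rfl
  · rintro (rfl | rfl)
    exacts [hempty, hm𝓕]

end IsReesMatrixUnitsMap

open Classical in
noncomputable def toMatrixUnit (x : ℤ × ℤ × Set ℤ) : Option (ℤ × ℤ) :=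
  if x.2.2 = ∅ then none else some (x.1, x.2.1)

lemma toMatrixUnit_of_eq_empty {x : ℤ × ℤ × Set ℤ} (hx : x.2.2 = ∅) : toMatrixUnit x = none :=
  if_pos hx

lemma toMatrixUnit_of_singleton {x : ℤ × ℤ × Set ℤ} {k : ℤ} (hx : x.2.2 = {k}) :
    toMatrixUnit x = some (x.1, x.2.1) :=
  if_neg (hx ▸ Set.singleton_ne_empty k)

lemma toMatrixUnit_smul3 {k : ℤ} {x y : ℤ × ℤ × Set ℤ} (hx : x.2.2 = ∅ ∨ x.2.2 = {k})
    (hy : y.2.2 = ∅ ∨ y.2.2 = {k}) :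
    toMatrixUnit (smul3 x y) = mmul (toMatrixUnit x) (toMatrixUnit y) := by
  rcases hx with hx | hx
  · rw [toMatrixUnit_of_eq_empty hx, toMatrixUnit_of_eq_empty (smul3_snd_snd_of_left_eq_empty hx),
      mmul_none_left]
  rcases hy with hy | hy
  · rw [toMatrixUnit_of_eq_empty hy, toMatrixUnit_of_eq_empty (smul3_snd_snd_of_right_eq_empty hy),
      mmul_none_right]
  rw [toMatrixUnit_of_singleton hx, toMatrixUnit_of_singleton hy, mmul_some]
  split_ifs with hxy
  · rw [smul3_of_eq hxy]
    exact toMatrixUnit_of_singleton (k := k) (by simp [hx, hy])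
  · exact toMatrixUnit_of_eq_empty (smul3_snd_snd_of_singleton_of_ne hx hy hxy)

lemma isReesMatrixUnitsMap_pair (k : ℤ) :
    IsReesMatrixUnitsMap {∅, {k}} fun x ↦ toMatrixUnit x.1 := by
  refine ⟨?_, fun a b c hc ↦
    (congrArg toMatrixUnit hc).trans (toMatrixUnit_smul3 a.2 b.2), ?_⟩
  · rintro (_ | ⟨i, j⟩)
    · exact ⟨⟨(0, 0, ∅), Or.inl rfl⟩, toMatrixUnit_of_eq_empty rfl⟩
    · exact ⟨⟨(i, j, {k}), Or.inr rfl⟩, toMatrixUnit_of_singleton rfl⟩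
  · rintro ⟨⟨i₁, j₁, F₁⟩, hF₁⟩ ⟨⟨i₂, j₂, F₂⟩, hF₂⟩
    obtain rfl | rfl : F₁ = ∅ ∨ F₁ = {k} := hF₁ <;>
      obtain rfl | rfl : F₂ = ∅ ∨ F₂ = {k} := hF₂ <;>
      simp [toMatrixUnit, Subtype.ext_iff]

/-- the Rees quotient of `S(𝓕)` by the ideal of `∅`-triples is isomorphic
to the semigroup of `ℤ × ℤ` matrix units iff `𝓕 = {∅, F}` with `F` a one-element
subset of `ℕ`. -/
theorem stmt16 (𝓕 : Set (Set ℤ)) (h : OmegaClosed 𝓕) (hempty : (∅ : Set ℤ) ∈ 𝓕) :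
    (∃ g : {x : ℤ × ℤ × Set ℤ // x ∈ Scar 𝓕} → Option (ℤ × ℤ),
      Function.Surjective g ∧
      (∀ a b c : {x : ℤ × ℤ × Set ℤ // x ∈ Scar 𝓕},
        (c : ℤ × ℤ × Set ℤ) = smul3 a b → g c = mmul (g a) (g b)) ∧
      (∀ a b : {x : ℤ × ℤ × Set ℤ // x ∈ Scar 𝓕},
        g a = g b ↔ (a = b ∨ ((a : ℤ × ℤ × Set ℤ).2.2 = (∅ : Set ℤ) ∧
          (b : ℤ × ℤ × Set ℤ).2.2 = (∅ : Set ℤ))))) ↔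
    (∃ k : ℕ, 𝓕 = {(∅ : Set ℤ), {(k : ℤ)}}) := by
  constructor
  · rintro ⟨g, hg⟩
    exact IsReesMatrixUnitsMap.exists_eq_pair hg h hempty
  · rintro ⟨k, rfl⟩
    exact ⟨_, isReesMatrixUnitsMap_pair k⟩
end
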